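/- arXiv:1510.00644 — 2 statements merged into one kernel-verified Lean document; each statement's English description precedes it below -/
import Mathlib

section
/- With A, U, and the natural order as above, let I_plac be the two-sided ideal of U generated by the colored Knuth relations: xzy = zxy and yxz = yzx for x < y < z; yyx = yxy and zyy = yzy for y unbarred and x < y < z; yyz = yzy and xyy = yxy for y barred and x < y < z. Then the noncommutative super elementary symmetric functions e_k(u) and e_l(u) commute in U/I_plac for all k, l. -/
open scoped BigOperators
open Classical

noncomputable section

namespace NCS

/-- A colored letter: an element of `Fin N` together with a `Bool` which is
`true` for barred letters and `false` for unbarred letters. -/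
abbrev Letter (N : ℕ) := Fin N × Bool

variable {N : ℕ}

/-- The key of the natural order `1 < 1̄ < 2 < 2̄ < ⋯ < N < N̄`. -/
def natKey (x : Letter N) : ℕ := 2 * x.1.val + (if x.2 then 1 else 0)

/-- The key of the big bar order `1 ≺ ⋯ ≺ N ≺ 1̄ ≺ ⋯ ≺ N̄`. -/
def barKey (N : ℕ) (x : Letter N) : ℕ := if x.2 then N + x.1.val else x.1.val

/-- A shuffle order on the alphabet, encoded by an injective key function which is
increasing on unbarred letters and on barred letters. -/
def IsShuffleKey (key : Letter N → ℕ) : Prop :=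
  Function.Injective key ∧
  (∀ a b : Fin N, a < b → key (a, false) < key (b, false)) ∧
  (∀ a b : Fin N, a < b → key (a, true) < key (b, true))

/-- The free associative `ℤ`-algebra on the alphabet. -/
abbrev FA (N : ℕ) := MonoidAlgebra ℤ (FreeMonoid (Letter N))

/-- The monomial of a colored word. -/
def wrd (w : List (Letter N)) : FA N := MonoidAlgebra.single (FreeMonoid.ofList w) 1

/-- `y ≥' x` : `y > x`, or `y` and `x` are equal barred letters. -/
def colGE (key : Letter N → ℕ) (y x : Letter N) : Prop :=
  key x < key y ∨ (y = x ∧ y.2 = true)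

/-- `y ≤'' z` : `y < z`, or `y` and `z` are equal unbarred letters. -/
def rowLE (key : Letter N → ℕ) (y z : Letter N) : Prop :=
  key y < key z ∨ (y = z ∧ y.2 = false)

/-- `x ≤col y` : `x < y`, or `x` and `y` are equal barred letters. -/
def colLE (key : Letter N → ℕ) (x y : Letter N) : Prop :=
  key x < key y ∨ (x = y ∧ x.2 = true)

/-- The noncommutative super elementary symmetric function `e_k(S)` with letters
restricted to the set `S`. -/
def eSet (key : Letter N → ℕ) (S : Set (Letter N)) (k : ℕ) : FA N :=
  ∑ f ∈ (Finset.univ : Finset (Fin k → Letter N)).filter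
      (fun f => (∀ i, f i ∈ S) ∧ ∀ i j : Fin k, (j : ℕ) = (i : ℕ) + 1 → colGE key (f i) (f j)),
    wrd (List.ofFn f)

/-- The noncommutative super elementary symmetric function `e_k(u)`. -/
def eU (key : Letter N → ℕ) (k : ℕ) : FA N := eSet key Set.univ k

/-- `e_k(u)` with integer index; `0` for negative `k`. -/
def eZ (key : Letter N → ℕ) (k : ℤ) : FA N := if 0 ≤ k then eU key k.toNat else 0

/-- `e_k(S)` with integer index; `0` for negative `k`. -/
def eSetZ (key : Letter N → ℕ) (S : Set (Letter N)) (k : ℤ) : FA N :=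
  if 0 ≤ k then eSet key S k.toNat else 0

/-- The noncommutative super homogeneous symmetric function `h_k(u)`. -/
def hU (key : Letter N → ℕ) (k : ℕ) : FA N :=
  ∑ f ∈ (Finset.univ : Finset (Fin k → Letter N)).filter
      (fun f => ∀ i j : Fin k, (j : ℕ) = (i : ℕ) + 1 → rowLE key (f i) (f j)),
    wrd (List.ofFn f)

/-- The relations generating the two-sided ideal `I_Kron` (with respect to the
natural order; recall `natKey x + 1 = natKey y` says `x = y↓`). -/
inductive kronRel (N : ℕ) : FA N → FA N → Prop
  | rel3 (x y : Letter N) (hy : y.2 = false) (h : natKey x < natKey y) :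
      kronRel N (wrd [y, y, x]) (wrd [y, x, y])
  | rel3b (y z : Letter N) (hy : y.2 = false) (h : natKey y < natKey z) :
      kronRel N (wrd [z, y, y]) (wrd [y, z, y])
  | rel4 (y z : Letter N) (hy : y.2 = true) (h : natKey y < natKey z) :
      kronRel N (wrd [y, y, z]) (wrd [y, z, y])
  | rel4b (x y : Letter N) (hy : y.2 = true) (h : natKey x < natKey y) :
      kronRel N (wrd [x, y, y]) (wrd [y, x, y])
  | rot (x y z : Letter N) (h1 : natKey x + 1 = natKey y) (h2 : natKey y + 1 = natKey z) :
      kronRel N (wrd [x, z, y] - wrd [z, x, y]) (wrd [y, x, z] - wrd [y, z, x])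
  | far (x z : Letter N) (h : natKey x + 2 < natKey z) :
      kronRel N (wrd [x, z]) (wrd [z, x])

/-- The relations generating the ⋖-colored plactic ideal `I_plac^⋖`. -/
inductive placRel (N : ℕ) (key : Letter N → ℕ) : FA N → FA N → Prop
  | k1 (x y z : Letter N) (h1 : key x < key y) (h2 : key y < key z) :
      placRel N key (wrd [x, z, y]) (wrd [z, x, y])
  | k2 (x y z : Letter N) (h1 : key x < key y) (h2 : key y < key z) :
      placRel N key (wrd [y, x, z]) (wrd [y, z, x])
  | k3 (x y : Letter N) (hy : y.2 = false) (h : key x < key y) :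
      placRel N key (wrd [y, y, x]) (wrd [y, x, y])
  | k3b (y z : Letter N) (hy : y.2 = false) (h : key y < key z) :
      placRel N key (wrd [z, y, y]) (wrd [y, z, y])
  | k4 (y z : Letter N) (hy : y.2 = true) (h : key y < key z) :
      placRel N key (wrd [y, y, z]) (wrd [y, z, y])
  | k4b (x y : Letter N) (hy : y.2 = true) (h : key x < key y) :
      placRel N key (wrd [x, y, y]) (wrd [y, x, y])

/-- The relations generating the ideal `I_kronknuth`. -/
inductive kkRel (N : ℕ) : FA N → FA N → Prop
  | rel3 (x y : Letter N) (hy : y.2 = false) (h : natKey x < natKey y) :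
      kkRel N (wrd [y, y, x]) (wrd [y, x, y])
  | rel3b (y z : Letter N) (hy : y.2 = false) (h : natKey y < natKey z) :
      kkRel N (wrd [z, y, y]) (wrd [y, z, y])
  | rel4 (y z : Letter N) (hy : y.2 = true) (h : natKey y < natKey z) :
      kkRel N (wrd [y, y, z]) (wrd [y, z, y])
  | rel4b (x y : Letter N) (hy : y.2 = true) (h : natKey x < natKey y) :
      kkRel N (wrd [x, y, y]) (wrd [y, x, y])
  | rot (x y z : Letter N) (h1 : natKey x + 1 = natKey y) (h2 : natKey y + 1 = natKey z) :
      kkRel N (wrd [x, z, y] - wrd [z, x, y]) (wrd [y, x, z] - wrd [y, z, x])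
  | kk1 (x y z : Letter N) (h1 : natKey x < natKey y) (h2 : natKey y < natKey z)
      (h3 : natKey x + 2 < natKey z) :
      kkRel N (wrd [x, z, y]) (wrd [z, x, y])
  | kk2 (x y z : Letter N) (h1 : natKey x < natKey y) (h2 : natKey y < natKey z)
      (h3 : natKey x + 2 < natKey z) :
      kkRel N (wrd [y, x, z]) (wrd [y, z, x])

end NCS
namespace NCS

variable {N : ℕ}

/-- The ordinary word `w^r`: barred letters shuffled to the right, that subword
reversed and de-barred.  Letters are recorded `1`-indexed. -/
def plainr (w : List (Letter N)) : List ℕ :=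
  (w.filter (fun x => !x.2)).map (fun x => x.1.val + 1) ++
    ((w.filter (fun x => x.2)).reverse).map (fun x => x.1.val + 1)

/-- The number of barred letters of a colored word. -/
def barredCount (w : List (Letter N)) : ℕ := (w.filter (fun x => x.2)).length

/-- An ordinary word (in the `1`-indexed alphabet) is Yamanouchi of content `lam`
(`lam i` = multiplicity of the letter `i+1`). -/
def IsYamOf (lam : ℕ → ℕ) (u : List ℕ) : Prop :=
  (∀ i : ℕ, u.count (i + 1) = lam i) ∧
    ∀ t i : ℕ, (u.drop t).count (i + 2) ≤ (u.drop t).count (i + 1)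

/-- An ordinary word is Yamanouchi (of some content). -/
def IsYamWord (u : List ℕ) : Prop :=
  ∀ t i : ℕ, (u.drop t).count (i + 2) ≤ (u.drop t).count (i + 1)

/-- The set of colored Yamanouchi words of content `lam` with exactly `d` barred letters. -/
def CYW (N : ℕ) (lam : ℕ → ℕ) (d : ℕ) : Set (List (Letter N)) :=
  {w | IsYamOf lam (plainr w) ∧ barredCount w = d}

/-- `CYW` as a finset (all its members have length `n = Σ lam`). -/
def CYWfin (N : ℕ) (lam : ℕ → ℕ) (d n : ℕ) : Finset (List (Letter N)) :=
  ((Finset.univ : Finset (Fin n → Letter N)).image List.ofFn).filter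
    (fun w => w ∈ CYW N lam d)

/-- A set of colored words is shuffle closed. -/
def ShuffleClosed (W : Set (List (Letter N))) : Prop :=
  ∀ (u v : List (Letter N)) (x y : Letter N), x.2 ≠ y.2 →
    (u ++ x :: y :: v) ∈ W → (u ++ y :: x :: v) ∈ W

/-- The ⋖-descent set of a colored word (`0`-indexed positions). -/
def DesSet (key : Letter N → ℕ) (w : List (Letter N)) : Set ℕ :=
  {i | ∃ h : i + 1 < w.length,
    key (w.get ⟨i + 1, h⟩) < key (w.get ⟨i, Nat.lt_of_succ_lt h⟩) ∨
      (w.get ⟨i, Nat.lt_of_succ_lt h⟩ = w.get ⟨i + 1, h⟩ ∧ (w.get ⟨i + 1, h⟩).2 = true)}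

/-- Coefficient of the monomial `m` in Gessel's fundamental quasisymmetric
function `Q_S` for words of length `t`. -/
def Qcoeff (t : ℕ) (S : Set ℕ) (m : ℕ →₀ ℕ) : ℤ :=
  Nat.card {i : Fin t → ℕ //
    (∀ j k : Fin t, j ≤ k → i j ≤ i k) ∧
    (∀ j k : Fin t, (k : ℕ) = (j : ℕ) + 1 → (j : ℕ) ∈ S → i j < i k) ∧
    (∀ v : ℕ, m v = (Finset.univ.filter (fun j : Fin t => i j = v)).card)}

/-- Gessel's fundamental quasisymmetric function as a power series in the
variables `x_0, x_1, …`. -/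
def Qqs (t : ℕ) (S : Set ℕ) : MvPowerSeries ℕ ℤ := fun m => Qcoeff t S m

/-- The boxes of the (possibly restricted) shape with column lengths bounded by
`rows` and row lengths given by `nu`. -/
def shapeFin (nu : ℕ → ℕ) (rows : ℕ) : Finset (ℕ × ℕ) :=
  (Finset.range rows ×ˢ Finset.range (nu 0)).filter (fun p => p.2 < nu p.1)

/-- `E` is a ⋖-colored tableau of shape `nu` (rows weakly increase with equal
letters unbarred; columns weakly increase with equal letters barred). -/
def IsCT (key : Letter N → ℕ) (nu : ℕ → ℕ) (E : ℕ × ℕ → Letter N) : Prop :=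
  (∀ r c : ℕ, c + 1 < nu r → rowLE key (E (r, c)) (E (r, c + 1))) ∧
  (∀ r c : ℕ, c < nu (r + 1) → colLE key (E (r, c)) (E (r + 1, c)))

/-- Pad a partition given on `Fin n` to a function on `ℕ`. -/
def padF {n : ℕ} (f : Fin n → ℕ) : ℕ → ℕ := fun i => if h : i < n then f ⟨i, h⟩ else 0

/-- Extend a filling of the shape to all of `ℕ × ℕ` by a junk letter. -/
def extT (nu : ℕ → ℕ) (rows : ℕ) (junk : Letter N)
    (T : {p : ℕ × ℕ // p ∈ shapeFin nu rows} → Letter N) : ℕ × ℕ → Letter N :=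
  fun p => if h : p ∈ shapeFin nu rows then T ⟨p, h⟩ else junk

/-- The reading word `sqread`: diagonals from southwest to northeast; on each
diagonal the unbarred entries are read in the ↖ direction followed by the barred
entries in the ↘ direction. -/
def sqread (nu : ℕ → ℕ) (rows : ℕ) (E : ℕ × ℕ → Letter N) : List (Letter N) :=
  (List.range (rows + nu 0)).flatMap (fun k =>
    let boxes : List (ℕ × ℕ) := (List.range rows).filterMap (fun (r : ℕ) =>
      let c : ℤ := (r : ℤ) + (k : ℤ) - (rows : ℤ) + 1
      if 0 ≤ c ∧ c.toNat < nu r then some (r, c.toNat) else none)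
    ((boxes.filter (fun b => !(E b).2)).reverse ++ boxes.filter (fun b => (E b).2)).map E)

/-- The column reading word: columns read bottom to top, leftmost column first. -/
def colword (nu : ℕ → ℕ) (rows : ℕ) (E : ℕ × ℕ → Letter N) : List (Letter N) :=
  (List.range (nu 0)).flatMap (fun c =>
    ((List.range rows).filter (fun r => decide (c < nu r))).reverse.map (fun r => E (r, c)))

/-- The Kostka number: semistandard Young tableaux of shape `nu` and content `m`
(entries `1`-indexed; entry `i+1` corresponds to the variable `x_i`). -/
def kostka (nu : ℕ → ℕ) (m : ℕ →₀ ℕ) : ℤ :=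
  Nat.card {T : ℕ × ℕ → ℕ //
    (∀ r c : ℕ, c + 1 < nu r → T (r, c) ≤ T (r, c + 1)) ∧
    (∀ r c : ℕ, c < nu (r + 1) → T (r, c) < T (r + 1, c)) ∧
    (∀ r c : ℕ, c < nu r → 1 ≤ T (r, c)) ∧
    (∀ r c : ℕ, ¬ c < nu r → T (r, c) = 0) ∧
    (∀ i : ℕ, (m i : ℕ) = Nat.card {p : ℕ × ℕ // p.2 < nu p.1 ∧ T p = i + 1})}

/-- The parts of a partition of `n`, as a weakly decreasing list. -/
def partList {n : ℕ} (ν : Nat.Partition n) : List ℕ := (ν.parts.sort (· ≤ ·)).reverse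

/-- The parts of a partition of `n`, as a function `ℕ → ℕ` (`0`-indexed). -/
def partFun {n : ℕ} (ν : Nat.Partition n) : ℕ → ℕ := fun i => (partList ν).getD i 0

/-- The conjugate partition: `ν'_j = #{i < rows : ν_i ≥ j}`. -/
def conjP (nu : ℕ → ℕ) (j : ℕ) (rows : ℕ) : ℕ :=
  ((Finset.range rows).filter (fun i => j ≤ nu i)).card

/-- The noncommutative super Schur function
`𝔍_ν(u) = Σ_{π ∈ S_t} sgn(π) e_{ν'_1+π(1)-1}(u) ⋯ e_{ν'_t+π(t)-t}(u)`, `t = ν_1`. -/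
def JncF (key : Letter N → ℕ) (nu : ℕ → ℕ) (rows : ℕ) : FA N :=
  ∑ π : Equiv.Perm (Fin (nu 0)),
    (Equiv.Perm.sign π : ℤ) •
      (List.ofFn (fun i : Fin (nu 0) =>
        eZ key ((conjP nu (i.1 + 1) rows : ℤ) + ((π i).1 : ℤ) - (i.1 : ℤ)))).prod

end NCS
namespace NCS

variable {N : ℕ}

/-- A partition diagram (as a set of `0`-indexed boxes). -/
def IsPartitionDiagram (P : Finset (ℕ × ℕ)) : Prop :=
  ∀ p ∈ P, ∀ q : ℕ × ℕ, q.1 ≤ p.1 → q.2 ≤ p.2 → q ∈ P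

/-- `p ≤ q` in the northeast order: `q.1 ≤ p.1` and `p.2 ≤ q.2`. -/
def neLE (p q : ℕ × ℕ) : Prop := q.1 ≤ p.1 ∧ p.2 ≤ q.2

/-- A restricted shape: a lower order ideal of a partition diagram for the
northeast order. -/
def IsRestrictedShape (D : Finset (ℕ × ℕ)) : Prop :=
  ∃ P : Finset (ℕ × ℕ), IsPartitionDiagram P ∧ D ⊆ P ∧
    ∀ p ∈ P, ∀ q ∈ D, neLE p q → p ∈ D

/-- A restricted colored tableau (for the natural order). -/
structure RCT (N : ℕ) where
  shape : Finset (ℕ × ℕ)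
  restricted : IsRestrictedShape shape
  entry : ℕ × ℕ → Letter N
  row : ∀ r c : ℕ, (r, c) ∈ shape → (r, c + 1) ∈ shape →
    natKey (entry (r, c)) < natKey (entry (r, c + 1)) ∨
      (entry (r, c) = entry (r, c + 1) ∧ (entry (r, c)).2 = false)
  col : ∀ r c : ℕ, (r, c) ∈ shape → (r + 1, c) ∈ shape →
    natKey (entry (r, c)) < natKey (entry (r + 1, c)) ∨
      (entry (r, c) = entry (r + 1, c) ∧ (entry (r, c)).2 = true)

/-- A ↖ arrow of `R` from the box `tail` (containing `a+1`) to the box `head`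
(containing `a`); the two boxes are opposite corners of a rectangle whose
intersection with the shape is an arrow subtableau. -/
def nwArrow (R : RCT N) (tail head : ℕ × ℕ) : Prop :=
  head ∈ R.shape ∧ tail ∈ R.shape ∧ head.1 < tail.1 ∧ head.2 < tail.2 ∧
  (∃ a b : Fin N, R.entry head = (a, false) ∧ R.entry tail = (b, false) ∧
    (b : ℕ) = (a : ℕ) + 1) ∧
  ((tail.1 = head.1 + 1 ∧ tail.2 = head.2 + 1 ∧ (tail.1, head.2) ∈ R.shape) ∨
   (head.1 + 1 < tail.1 ∧
    (∀ p ∈ R.shape, head.1 ≤ p.1 → p.1 ≤ tail.1 → head.2 ≤ p.2 → p.2 ≤ tail.2 →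
      p.2 = head.2 ∨ p.1 = tail.1) ∧
    (∀ r : ℕ, head.1 ≤ r → r ≤ tail.1 → (r, head.2) ∈ R.shape) ∧
    (∀ c : ℕ, head.2 ≤ c → c ≤ tail.2 → (tail.1, c) ∈ R.shape)))

/-- A ↘ arrow of `R` from the box `tail` (containing `ā`) to the box `head`
(containing `(a+1)`-bar). -/
def seArrow (R : RCT N) (tail head : ℕ × ℕ) : Prop :=
  tail ∈ R.shape ∧ head ∈ R.shape ∧ tail.1 < head.1 ∧ tail.2 < head.2 ∧
  (∃ a b : Fin N, R.entry tail = (a, true) ∧ R.entry head = (b, true) ∧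
    (b : ℕ) = (a : ℕ) + 1) ∧
  ((head.1 = tail.1 + 1 ∧ head.2 = tail.2 + 1 ∧ (head.1, tail.2) ∈ R.shape) ∨
   (tail.2 + 1 < head.2 ∧
    (∀ p ∈ R.shape, tail.1 ≤ p.1 → p.1 ≤ head.1 → tail.2 ≤ p.2 → p.2 ≤ head.2 →
      p.2 = tail.2 ∨ p.1 = head.1) ∧
    (∀ r : ℕ, tail.1 ≤ r → r ≤ head.1 → (r, tail.2) ∈ R.shape) ∧
    (∀ c : ℕ, tail.2 ≤ c → c ≤ head.2 → (head.1, c) ∈ R.shape)))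

/-- A box is the tail of an arrow of `R`. -/
def IsArrowTail (R : RCT N) (β : ℕ × ℕ) : Prop :=
  (∃ h, nwArrow R β h) ∨ (∃ h, seArrow R β h)

/-- A box which is maximal in `D` for the northeast order. -/
def NEMaximal (D : Finset (ℕ × ℕ)) (β : ℕ × ℕ) : Prop :=
  β ∈ D ∧ ∀ q ∈ D, neLE β q → q = β

/-- `L` is an arrow respecting reading order of the RCT `R`: an enumeration of
the boxes compatible with the northeast order, reading every arrow tail before
the corresponding head. -/
def IsARWord (R : RCT N) (L : List (ℕ × ℕ)) : Prop :=
  L.Nodup ∧ (∀ β : ℕ × ℕ, β ∈ L ↔ β ∈ R.shape) ∧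
  (∀ β β' : ℕ × ℕ, β ∈ L → β' ∈ L → neLE β β' → β ≠ β' →
    L.idxOf β < L.idxOf β') ∧
  (∀ t h : ℕ × ℕ, nwArrow R t h ∨ seArrow R t h → L.idxOf t < L.idxOf h)

end NCS
namespace NCS

variable {N : ℕ}

/-! ### Word conversion -/

/-- Rotate a list once to the right. -/
def rotR {α : Type*} (l : List α) : List α := l.rotate (l.length - 1)

/-- Word conversion: fix all letters not satisfying `p` and rotate each maximal
consecutive run of letters satisfying `p` once to the right. -/
def conv {α : Type*} (p : α → Bool) : List α → List α
  | [] => []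
  | x :: xs =>
    if p x = true then
      rotR ((x :: xs).takeWhile p) ++ conv p (xs.dropWhile p)
    else x :: conv p xs
termination_by l => l.length
decreasing_by
  · exact Nat.lt_succ_of_le ((List.dropWhile_suffix p).length_le)
  · exact Nat.lt_succ_self _

/-! ### Ordinary RSK insertion -/

/-- Row bumping: insert `x` into a weakly increasing row, bumping the leftmost
entry strictly greater than `x`. -/
def bumpRow : List ℕ → ℕ → List ℕ × Option ℕ
  | [], x => ([x], none)
  | y :: ys, x =>
    if x < y then (x :: ys, some y)
    else
      let p := bumpRow ys x
      (y :: p.1, p.2)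

/-- Schensted insertion of a letter into a tableau (given as its list of rows). -/
def insertEntry : List (List ℕ) → ℕ → List (List ℕ)
  | [], x => [[x]]
  | row :: rest, x =>
    match bumpRow row x with
    | (row', none) => row' :: rest
    | (row', some y) => row' :: insertEntry rest y

/-- The insertion tableau of an ordinary word. -/
def insertionTableau (w : List ℕ) : List (List ℕ) := w.foldl insertEntry []

/-- A tableau (list of rows) is superstandard: row `i` is filled with `i+1`'s
(`1`-indexed letters). -/
def IsSuperstandard (Q : List (List ℕ)) : Prop :=
  ∀ i : ℕ, ∀ h : i < Q.length, ∀ v ∈ Q.get ⟨i, h⟩, v = i + 1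

/-! ### Standardization -/

/-- The ⋖-standardization of a colored word: occurrences of each letter are
relabelled, smallest letter first, left to right for unbarred letters and
right to left for barred letters, by `1, 2, …`. -/
def stdz (key : Letter N → ℕ) (w : List (Letter N)) : List ℕ :=
  (List.finRange w.length).map (fun i =>
    ((List.finRange w.length).filter
        (fun j => decide (key (w.get j) < key (w.get i)))).length +
    (if (w.get i).2 then
        ((List.finRange w.length).filter
          (fun j => decide (i < j ∧ w.get j = w.get i))).length
      else
        ((List.finRange w.length).filter
          (fun j => decide (j < i ∧ w.get j = w.get i))).length) + 1)

/-- The free `ℤ`-algebra on the ordinary (unbarred) alphabet `ℕ`. -/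
abbrev FAO := MonoidAlgebra ℤ (FreeMonoid ℕ)

/-- The monomial of an ordinary word. -/
def wrdO (w : List ℕ) : FAO := MonoidAlgebra.single (FreeMonoid.ofList w) 1

/-- The ordinary Knuth (plactic) relations. -/
inductive knuthRel : FAO → FAO → Prop
  | k1 (a b c : ℕ) (h1 : a < b) (h2 : b < c) : knuthRel (wrdO [a, c, b]) (wrdO [c, a, b])
  | k2 (a b c : ℕ) (h1 : a < b) (h2 : b < c) : knuthRel (wrdO [b, a, c]) (wrdO [b, c, a])
  | k3 (a b : ℕ) (h : a < b) : knuthRel (wrdO [b, b, a]) (wrdO [b, a, b])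
  | k4 (b c : ℕ) (h : b < c) : knuthRel (wrdO [c, b, b]) (wrdO [b, c, b])

/-! ### Pairing, the noncommutative Cauchy product, symmetric series -/

/-- The bilinear pairing on `U` for which the colored words are orthonormal. -/
def pairU (f g : FA N) : ℤ := ∑ w ∈ f.coeff.support, f.coeff w * g.coeff w

/-- Coefficient of `x^m` in the noncommutative Cauchy product
`Ω(x,u) = Π_j (c_{z_1}(x_j) ⋯ c_{z_{2N}}(x_j))`: the product of the `h_{m_j}(u)`
in increasing order of `j`. -/
def OmegaC (key : Letter N → ℕ) (m : ℕ →₀ ℕ) : FA N :=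
  ((m.support.sort (· ≤ ·)).map (fun j => hU key (m j))).prod

/-- Total degree of a monomial. -/
def degM (m : ℕ →₀ ℕ) : ℕ := m.sum fun _ k => k

/-- Coefficient of `x^m` in the monomial symmetric function `m_ν`. -/
def mCoeff {k : ℕ} (ν : Nat.Partition k) (m : ℕ →₀ ℕ) : ℤ :=
  if Multiset.map (fun j => m j) m.support.val = ν.parts then 1 else 0

/-- `h_ν(u) = h_{ν_1}(u) h_{ν_2}(u) ⋯`. -/
def hProd (key : Letter N → ℕ) (L : List ℕ) : FA N := (L.map (hU key)).prod

/-- Coefficient of `x^m` in `F_γ(x) = Σ_w γ_w Q_{Des(w)}(x)`. -/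
def FgammaC (key : Letter N → ℕ) (γ : FA N) (m : ℕ →₀ ℕ) : ℤ :=
  ∑ w ∈ γ.coeff.support, γ.coeff w *
    Qcoeff (FreeMonoid.toList w).length (DesSet key (FreeMonoid.toList w)) m

/-- A series (given by its coefficients) is symmetric. -/
def SymmSeries (F : (ℕ →₀ ℕ) → ℤ) : Prop :=
  ∀ σ : Equiv.Perm ℕ, ∀ m : ℕ →₀ ℕ, F (Finsupp.mapDomain σ m) = F m

/-! ### Characters of symmetric groups and Kronecker coefficients -/

/-- The power sum polynomial `p_k` in `n` variables. -/
def powS (n k : ℕ) : MvPolynomial (Fin n) ℤ := ∑ j : Fin n, MvPolynomial.X j ^ k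

/-- The Vandermonde alternant `a_δ = Σ_σ sgn(σ) Π_i x_{σ(i)}^{n-1-i}`. -/
def aDelta (n : ℕ) : MvPolynomial (Fin n) ℤ :=
  ∑ σ : Equiv.Perm (Fin n),
    (Equiv.Perm.sign σ : ℤ) • ∏ i : Fin n, MvPolynomial.X (σ i) ^ (n - 1 - (i : ℕ))

/-- The irreducible character `χ^λ` of `S_n` evaluated at `σ`, via the Frobenius
character formula: the coefficient of `x^{λ+δ}` in `a_δ · p_{cycleType σ}`. -/
def chi (n : ℕ) (lam : Fin n → ℕ) (σ : Equiv.Perm (Fin n)) : ℤ :=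
  MvPolynomial.coeff
    (Finsupp.equivFunOnFinite.symm (fun i : Fin n => lam i + (n - 1 - (i : ℕ))))
    (aDelta n * (σ.cycleType.map (fun k => powS n k)).prod)

/-- The hook partition `μ(d) = (n-d, 1^d)`, as a function on `Fin n`. -/
def hookP (n d : ℕ) : Fin n → ℕ :=
  fun i => if (i : ℕ) = 0 then n - d else if (i : ℕ) ≤ d then 1 else 0

/-- `n!` times the Kronecker coefficient `g_{λμν}`, via
`g = (1/n!) Σ_σ χ^λ(σ) χ^μ(σ) χ^ν(σ)`. -/
def kronC (n : ℕ) (lam mu nu : Fin n → ℕ) : ℤ :=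
  ∑ σ : Equiv.Perm (Fin n), chi n lam σ * chi n mu σ * chi n nu σ

/-! ### Power series in `s` and `t` over `U/I_kronknuth` -/

/-- The quotient `U/I_kronknuth`. -/
abbrev QKK (N : ℕ) := RingQuot (kkRel N)

/-- The image of a generator in `U/I_kronknuth`. -/
def uQ (x : Letter N) : QKK N := RingQuot.mkRingHom (kkRel N) (wrd [x])

/-- A power series in `s` (variable `0`) only. -/
def serS (c : ℕ → QKK N) : MvPowerSeries (Fin 2) (QKK N) :=
  fun m => if m 1 = 0 then c (m 0) else 0

/-- A power series in `t` (variable `1`) only. -/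
def serT (c : ℕ → QKK N) : MvPowerSeries (Fin 2) (QKK N) :=
  fun m => if m 0 = 0 then c (m 1) else 0

/-- A constant power series. -/
def constSer (a : QKK N) : MvPowerSeries (Fin 2) (QKK N) :=
  fun m => if m = 0 then a else 0

/-- `f_x = 1 + u_x s` (`x` unbarred), `(1 - u_x s)⁻¹ = Σ_k u_x^k s^k` (`x` barred). -/
def fSer (x : Letter N) : MvPowerSeries (Fin 2) (QKK N) :=
  serS (fun k => if x.2 then uQ x ^ k else if k = 0 then 1 else if k = 1 then uQ x else 0)

/-- The inverse of `f_x`. -/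
def fSerInv (x : Letter N) : MvPowerSeries (Fin 2) (QKK N) :=
  serS (fun k => if x.2 then (if k = 0 then 1 else if k = 1 then -uQ x else 0)
    else (-uQ x) ^ k)

/-- `g_z = 1 + u_z t` (`z` unbarred), `(1 - u_z t)⁻¹` (`z` barred). -/
def gSer (z : Letter N) : MvPowerSeries (Fin 2) (QKK N) :=
  serT (fun k => if z.2 then uQ z ^ k else if k = 0 then 1 else if k = 1 then uQ z else 0)

/-- The inverse of `g_z`. -/
def gSerInv (z : Letter N) : MvPowerSeries (Fin 2) (QKK N) :=
  serT (fun k => if z.2 then (if k = 0 then 1 else if k = 1 then -uQ z else 0)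
    else (-uQ z) ^ k)

end NCS

namespace NCS

variable {N : ℕ}

lemma natKey_injective : Function.Injective (natKey : Letter N → ℕ) := by
  rintro ⟨a, b⟩ ⟨c, d⟩ h
  have hb : b = d := by
    rcases b <;> rcases d <;> revert h <;> simp [natKey] <;> intro h <;> omega
  subst hb
  have ha : a = c := by
    apply Fin.ext
    rcases b <;> simp [natKey] at h <;> omega
  subst ha; rfl

lemma natKey_lt (x : Letter N) : natKey x < 2 * N := by
  rcases x with ⟨a, b⟩
  have := a.2
  rcases b <;> simp [natKey] <;> omega

lemma wrd_nil : (wrd [] : FA N) = 1 := rfl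

lemma wrd_append (a b : List (Letter N)) : wrd (a ++ b) = wrd a * wrd b := by
  simp only [wrd, MonoidAlgebra.single_mul_single, one_mul]
  rfl

/-- The finset of letters with key `< m`. -/
def Sfin (N : ℕ) (m : ℕ) : Finset (Letter N) := Finset.univ.filter (fun x => natKey x < m)

/-- `z` may be prepended to the column `w`. -/
def ok (z : Letter N) (w : List (Letter N)) : Prop := ∀ h ∈ w.head?, colGE natKey z h

/-- Columns of length `k` with entries of key `< m`. -/
def colFin (N : ℕ) (m : ℕ) : ℕ → Finset (List (Letter N))
  | 0 => {[]}
  | k + 1 => ((Sfin N m ×ˢ colFin N m k).filter (fun p => ok p.1 p.2)).image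
      (fun p => p.1 :: p.2)

lemma mem_colFin {m k : ℕ} {w : List (Letter N)} :
    w ∈ colFin N m k ↔
      w.length = k ∧ (∀ x ∈ w, natKey x < m) ∧ w.Chain' (colGE natKey) := by
  induction k generalizing w with
  | zero =>
    simp only [colFin, Finset.mem_singleton]
    constructor
    · rintro rfl; simp; exact List.isChain_nil
    · rintro ⟨h, -, -⟩; exact List.length_eq_zero_iff.mp h
  | succ k ih =>
    simp only [colFin, Finset.mem_image, Finset.mem_filter, Finset.mem_product]
    constructor
    · rintro ⟨⟨z, w'⟩, ⟨⟨⟨hz, hw'⟩, hok⟩, rfl⟩⟩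
      rcases ih.mp hw' with ⟨hl, hmem, hch⟩
      refine ⟨by simp [hl], ?_, List.isChain_cons.mpr ⟨hok, hch⟩⟩
      intro x hx
      rcases List.mem_cons.mp hx with rfl | hx
      · exact (Finset.mem_filter.mp hz).2
      · exact hmem x hx
    · rintro ⟨hl, hmem, hch⟩
      rcases w with _ | ⟨z, w'⟩
      · simp at hl
      refine ⟨(z, w'), ⟨⟨⟨Finset.mem_filter.mpr ⟨Finset.mem_univ _, hmem z (List.mem_cons_self)⟩,
          ih.mpr ⟨by simpa using hl, fun x hx => hmem x (List.mem_cons_of_mem _ hx),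
            (List.isChain_cons.mp hch).2⟩⟩, (List.isChain_cons.mp hch).1⟩, rfl⟩⟩

lemma sum_colFin_succ {A : Type*} [AddCommMonoid A] (m k : ℕ) (F : List (Letter N) → A) :
    ∑ w ∈ colFin N m (k + 1), F w =
      ∑ p ∈ (Sfin N m ×ˢ colFin N m k).filter (fun p => ok p.1 p.2), F (p.1 :: p.2) := by
  rw [show colFin N m (k+1) = ((Sfin N m ×ˢ colFin N m k).filter
      (fun p => ok p.1 p.2)).image (fun p => p.1 :: p.2) from rfl]
  rw [Finset.sum_image]
  rintro ⟨a, b⟩ - ⟨c, d⟩ - h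
  simpa using h

lemma eSet_eq_sum_colFin (m k : ℕ) :
    eSet natKey {x : Letter N | natKey x < m} k = ∑ w ∈ colFin N m k, wrd w := by
  refine Finset.sum_bij (fun f _ => List.ofFn f) ?_ ?_ ?_ ?_
  · intro f hf
    simp only [Finset.mem_filter, Finset.mem_univ, true_and, Set.mem_setOf_eq] at hf
    obtain ⟨h1, h2⟩ := hf
    refine mem_colFin.mpr ⟨List.length_ofFn, ?_, ?_⟩
    · intro x hx
      rcases List.mem_ofFn.mp hx with ⟨i, rfl⟩
      exact h1 i
    · unfold List.Chain'
      rw [List.isChain_iff_getElem]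
      intro i hi
      rw [List.length_ofFn] at hi
      simp only [List.getElem_ofFn]
      exact h2 _ _ (by simp)
  · intro f hf g hg h
    exact List.ofFn_injective h
  · intro w hw
    rcases mem_colFin.mp hw with ⟨hl, hmem, hch⟩
    refine ⟨fun i => w.get (Fin.cast hl.symm i), ?_, ?_⟩
    · simp only [Finset.mem_filter, Finset.mem_univ, true_and, Set.mem_setOf_eq]
      refine ⟨fun i => hmem _ (List.get_mem w _), ?_⟩
      intro i j hij
      have hb1 := i.2
      have hb2 := j.2
      have h1 : (i : ℕ) + 1 < w.length := by omega
      have hc := List.isChain_iff_getElem.mp hch i (by omega)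
      have hj : (Fin.cast hl.symm j) = ⟨(i : ℕ) + 1, h1⟩ := Fin.ext (by simp [hij])
      show colGE natKey (w.get (Fin.cast hl.symm i)) (w.get (Fin.cast hl.symm j))
      rw [hj]
      exact hc
    · apply List.ext_get (by simp [hl])
      intro i h1 h2
      simp only [List.get_ofFn]
      congr 1
  · intro f hf
    rfl

/-- The colored plactic quotient. -/
abbrev QP (N : ℕ) := RingQuot (placRel N natKey)

/-- The quotient map. -/
def qh : FA N →+* QP N := RingQuot.mkRingHom _

lemma q_rel {a b : FA N} (h : placRel N natKey a b) : qh a = qh b :=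
  RingQuot.mkRingHom_rel h

lemma q_cons_congr (z : Letter N) {a b : List (Letter N)}
    (h : qh (wrd a) = qh (wrd b)) : qh (wrd (z :: a)) = qh (wrd (z :: b)) := by
  have ha : (z :: a) = [z] ++ a := rfl
  have hb : (z :: b) = [z] ++ b := rfl
  rw [ha, hb, wrd_append, wrd_append, map_mul, map_mul, h]

lemma q_congr3 {x1 x2 x3 y1 y2 y3 : Letter N} (t : List (Letter N))
    (h : qh (wrd [x1, x2, x3]) = qh (wrd [y1, y2, y3])) :
    qh (wrd (x1 :: x2 :: x3 :: t)) = qh (wrd (y1 :: y2 :: y3 :: t)) := by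
  have ha : (x1 :: x2 :: x3 :: t) = [x1, x2, x3] ++ t := rfl
  have hb : (y1 :: y2 :: y3 :: t) = [y1, y2, y3] ++ t := rfl
  rw [ha, hb, wrd_append, wrd_append, map_mul, map_mul, h]

lemma not_colGE {z h : Letter N} (hn : ¬ colGE natKey z h) :
    natKey z < natKey h ∨ (z = h ∧ z.2 = false) := by
  rw [colGE, not_or, not_and_or] at hn
  rcases Nat.lt_trichotomy (natKey z) (natKey h) with h1 | h1 | h1
  · exact Or.inl h1
  · have : z = h := natKey_injective h1
    subst this
    rcases hn.2 with h2 | h2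
    · exact absurd rfl h2
    · exact Or.inr ⟨rfl, by simpa using h2⟩
  · exact absurd h1 hn.1

lemma chain_le_head : ∀ {w : List (Letter N)}, w.Chain' (colGE natKey) →
    ∀ x ∈ w, ∀ h ∈ w.head?, natKey x ≤ natKey h := by
  intro w
  induction w with
  | nil => intro _ x hx; simp at hx
  | cons a w' ih =>
    intro hch x hx h hh
    simp only [List.head?_cons, Option.mem_def, Option.some.injEq] at hh
    subst hh
    rcases List.mem_cons.mp hx with rfl | hx
    · exact le_refl _
    · have hch' := List.isChain_cons.mp hch
      rcases w' with _ | ⟨b, w''⟩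
      · simp at hx
      · have h1 : natKey x ≤ natKey b := ih hch'.2 x hx b rfl
        have h2 : colGE natKey a b := hch'.1 b rfl
        rcases h2 with h2 | ⟨h2, -⟩
        · omega
        · subst h2; exact h1

lemma F1 (u : Letter N) : ∀ (w' : List (Letter N)) (z : Letter N),
    natKey z < natKey u → (∀ x ∈ w', natKey x < natKey u) →
    (z :: w').Chain' (colGE natKey) →
    qh (wrd ((z :: w') ++ [u])) = qh (wrd (z :: u :: w')) := by
  intro w'
  induction w' with
  | nil => intro z _ _ _; rfl
  | cons z' w'' ih =>
    intro z hz hw hch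
    have hch' := List.isChain_cons.mp hch
    have hstep : qh (wrd ((z' :: w'') ++ [u])) = qh (wrd (z' :: u :: w'')) := by
      refine ih z' (hw z' (List.mem_cons_self)) (fun x hx => hw x (List.mem_cons_of_mem _ hx)) hch'.2
    have h1 : qh (wrd ((z :: z' :: w'') ++ [u])) = qh (wrd (z :: z' :: u :: w'')) := by
      have : (z :: z' :: w'') ++ [u] = z :: ((z' :: w'') ++ [u]) := rfl
      rw [this]
      exact q_cons_congr z hstep
    rw [h1]
    have hGE : colGE natKey z z' := hch'.1 z' rfl
    refine q_congr3 w'' ?_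
    rcases hGE with hlt | ⟨heq, hbar⟩
    · exact q_rel (placRel.k2 z' z u hlt hz)
    · subst heq
      exact q_rel (placRel.k4 z u hbar hz)

lemma F3 (u z h : Letter N) (t : List (Letter N))
    (hcond : natKey z < natKey h ∨ (z = h ∧ z.2 = false))
    (hh : natKey h < natKey u) :
    qh (wrd (z :: u :: h :: t)) = qh (wrd (u :: z :: h :: t)) := by
  refine q_congr3 t ?_
  rcases hcond with hlt | ⟨heq, hbar⟩
  · exact q_rel (placRel.k1 z h u hlt hh)
  · subst heq
    exact (q_rel (placRel.k3b z u hbar hh)).symm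

/-- Sum of monomials of columns. -/
def eL (m k : ℕ) : FA N := ∑ w ∈ colFin N m k, wrd w

lemma eL_zero (m : ℕ) : (eL m 0 : FA N) = 1 := by
  show ∑ w ∈ ({[]} : Finset (List (Letter N))), wrd w = 1
  rw [Finset.sum_singleton]; rfl

lemma eL_one (m : ℕ) : (eL m 1 : FA N) = ∑ z ∈ Sfin N m, wrd [z] := by
  rw [eL, sum_colFin_succ]
  rw [Finset.filter_true_of_mem (fun p hp => ?_), Finset.sum_product]
  · refine Finset.sum_congr rfl (fun z _ => ?_)
    have h0 : colFin N m 0 = ({[]} : Finset (List (Letter N))) := rfl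
    rw [h0, Finset.sum_singleton]
  · have h2 := (Finset.mem_product.mp hp).2
    have h0 : colFin N m 0 = ({[]} : Finset (List (Letter N))) := rfl
    rw [h0, Finset.mem_singleton] at h2
    rw [h2]
    intro h hh
    simp at hh

lemma colFin_mono {m m' k : ℕ} (h : m ≤ m') : colFin N m k ⊆ colFin N m' k := by
  intro w hw
  rcases mem_colFin.mp hw with ⟨h1, h2, h3⟩
  exact mem_colFin.mpr ⟨h1, fun x hx => lt_of_lt_of_le (h2 x hx) h, h3⟩

lemma Sfin_succ (u : Letter N) : Sfin N (natKey u + 1) = insert u (Sfin N (natKey u)) := by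
  ext x
  simp only [Sfin, Finset.mem_filter, Finset.mem_univ, true_and, Finset.mem_insert]
  constructor
  · intro hx
    rcases Nat.lt_succ_iff_lt_or_eq.mp hx with h | h
    · exact Or.inr h
    · exact Or.inl (natKey_injective h)
  · rintro (rfl | h)
    · omega
    · omega

lemma u_not_mem_Sfin (u : Letter N) : u ∉ Sfin N (natKey u) := by
  simp [Sfin]

lemma mem_colFin_lower {m k : ℕ} {w : List (Letter N)}
    (hw : w ∈ colFin N (m + 1) k) (hh : ∀ h ∈ w.head?, natKey h < m) :
    w ∈ colFin N m k := by
  rcases mem_colFin.mp hw with ⟨h1, h2, h3⟩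
  refine mem_colFin.mpr ⟨h1, ?_, h3⟩
  intro x hx
  rcases w with _ | ⟨h, t⟩
  · simp at hx
  · exact lt_of_le_of_lt (chain_le_head h3 x hx h rfl) (hh h rfl)

lemma eL_expand (m k : ℕ) :
    (eL m (k + 1) : FA N) =
      ∑ z ∈ Sfin N m, ∑ w ∈ colFin N m k, (if ok z w then wrd (z :: w) else 0) := by
  rw [eL, sum_colFin_succ, Finset.sum_filter, Finset.sum_product]

lemma eL_rec (u : Letter N) (k : ℕ) :
    (eL (natKey u + 1) (k + 1) : FA N) =
      eL (natKey u) (k + 1) +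
        wrd [u] * (if u.2 then eL (natKey u + 1) k else eL (natKey u) k) := by
  rw [eL_expand, Sfin_succ u, Finset.sum_insert (u_not_mem_Sfin u)]
  have claimA : ∀ z ∈ Sfin N (natKey u),
      (∑ w ∈ colFin N (natKey u + 1) k, (if ok z w then wrd (z :: w) else 0)) =
        ∑ w ∈ colFin N (natKey u) k, (if ok z w then wrd (z :: w) else 0) := by
    intro z hz
    have hzm : natKey z < natKey u := by simpa [Sfin] using hz
    refine (Finset.sum_subset (colFin_mono (Nat.le_succ _)) ?_).symm
    intro w hw hnw
    by_cases hok : ok z w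
    · exfalso
      apply hnw
      apply mem_colFin_lower hw
      intro h hh
      rcases hok h hh with hlt | ⟨heq, -⟩
      · omega
      · rw [← heq]; exact hzm
    · rw [if_neg hok]
  rw [Finset.sum_congr rfl claimA, ← eL_expand]
  rcases hb : u.2 with _ | _
  · -- unbarred
    have hsub : (∑ w ∈ colFin N (natKey u + 1) k, (if ok u w then wrd (u :: w) else 0)) =
        ∑ w ∈ colFin N (natKey u) k, (if ok u w then wrd (u :: w) else 0) := by
      refine (Finset.sum_subset (colFin_mono (Nat.le_succ _)) ?_).symm
      intro w hw hnw
      by_cases hok : ok u w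
      · exfalso
        apply hnw
        apply mem_colFin_lower hw
        intro h hh
        rcases hok h hh with hlt | ⟨-, hbar⟩
        · exact hlt
        · rw [hb] at hbar; exact absurd hbar (by simp)
      · rw [if_neg hok]
    rw [hsub]
    have hall : ∀ w ∈ colFin N (natKey u) k, (if ok u w then wrd (u :: w) else 0) =
        wrd [u] * wrd w := by
      intro w hw
      rw [if_pos, show (u :: w) = [u] ++ w from rfl, wrd_append]
      intro h hh
      rcases mem_colFin.mp hw with ⟨-, h2, -⟩
      have : h ∈ w := by
        rcases w with _ | ⟨a, t⟩
        · simp at hh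
        · simp only [List.head?_cons, Option.mem_def, Option.some.injEq] at hh
          rw [← hh]; exact List.mem_cons_self
      exact Or.inl (h2 h this)
    rw [Finset.sum_congr rfl hall, ← Finset.mul_sum, ← eL]
    simp [add_comm]
  · -- barred
    have hall : ∀ w ∈ colFin N (natKey u + 1) k, (if ok u w then wrd (u :: w) else 0) =
        wrd [u] * wrd w := by
      intro w hw
      rw [if_pos, show (u :: w) = [u] ++ w from rfl, wrd_append]
      intro h hh
      rcases mem_colFin.mp hw with ⟨-, h2, -⟩
      have hmem : h ∈ w := by
        rcases w with _ | ⟨a, t⟩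
        · simp at hh
        · simp only [List.head?_cons, Option.mem_def, Option.some.injEq] at hh
          rw [← hh]; exact List.mem_cons_self
      have hlt : natKey h < natKey u + 1 := h2 h hmem
      rcases Nat.lt_succ_iff_lt_or_eq.mp hlt with h1 | h1
      · exact Or.inl h1
      · exact Or.inr ⟨natKey_injective h1.symm, hb⟩
    rw [Finset.sum_congr rfl hall, ← Finset.mul_sum, ← eL]
    simp [add_comm]

lemma key1_nat (u : Letter N) (k : ℕ) :
    qh (eL (natKey u) (k + 1) : FA N) * qh (wrd [u]) =
      qh (wrd [u]) * qh (eL (natKey u) (k + 1)) +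
        (qh (eL (natKey u) 1) * qh (wrd [u]) - qh (wrd [u]) * qh (eL (natKey u) 1)) *
          qh (eL (natKey u) k) := by
  set m := natKey u with hm
  set A := Sfin N m ×ˢ colFin N m k with hA
  have step1 : qh (eL m (k + 1) : FA N) * qh (wrd [u]) =
      ∑ p ∈ A.filter (fun p => ok p.1 p.2), qh (wrd (p.1 :: u :: p.2)) := by
    rw [← map_mul, eL, Finset.sum_mul, map_sum,
      sum_colFin_succ m k (fun w => qh (wrd w * wrd [u]))]
    refine Finset.sum_congr rfl ?_
    rintro ⟨z, w⟩ hp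
    simp only [hA, Finset.mem_filter, Finset.mem_product] at hp
    obtain ⟨⟨hz, hw⟩, hok⟩ := hp
    rcases mem_colFin.mp hw with ⟨hl, hmem, hch⟩
    have hz' : natKey z < natKey u := by simpa [Sfin, hm] using hz
    rw [← wrd_append]
    exact F1 u w z hz' (fun x hx => hmem x hx) (List.isChain_cons.mpr ⟨hok, hch⟩)
  have wrd3 : ∀ (z : Letter N) (w : List (Letter N)),
      qh (wrd [z]) * qh (wrd [u]) * qh (wrd w) = qh (wrd (z :: u :: w)) := by
    intro z w
    rw [← map_mul, ← map_mul, ← wrd_append, ← wrd_append]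
    rfl
  have wrd2 : ∀ (z : Letter N) (w : List (Letter N)),
      qh (wrd [z]) * qh (wrd w) = qh (wrd (z :: w)) := by
    intro z w
    rw [← map_mul, ← wrd_append]
    rfl
  have hprod2 : qh (eL m 1 : FA N) * qh (wrd [u]) * qh (eL m k) =
      ∑ p ∈ A, qh (wrd (p.1 :: u :: p.2)) := by
    rw [eL_one, eL, map_sum, map_sum, hA, Finset.sum_product]
    simp only [Finset.sum_mul, Finset.mul_sum]
    rw [Finset.sum_comm]
    exact Finset.sum_congr rfl fun z _ => Finset.sum_congr rfl fun w _ => wrd3 z w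
  have hprod0 : qh (eL m 1 : FA N) * qh (eL m k) = ∑ p ∈ A, qh (wrd (p.1 :: p.2)) := by
    rw [eL_one, eL, map_sum, map_sum, hA, Finset.sum_product]
    simp only [Finset.sum_mul, Finset.mul_sum]
    rw [Finset.sum_comm]
    exact Finset.sum_congr rfl fun z _ => Finset.sum_congr rfl fun w _ => wrd2 z w
  have hok_sum : ∑ p ∈ A.filter (fun p => ok p.1 p.2), qh (wrd (p.1 :: p.2)) =
      qh (eL m (k + 1)) := by
    rw [eL, map_sum, sum_colFin_succ m k (fun w => qh (wrd w))]
  have hnot : ∑ p ∈ A.filter (fun p => ¬ ok p.1 p.2), qh (wrd (p.1 :: u :: p.2)) =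
      qh (wrd [u]) * ∑ p ∈ A.filter (fun p => ¬ ok p.1 p.2), qh (wrd (p.1 :: p.2)) := by
    rw [Finset.mul_sum]
    refine Finset.sum_congr rfl ?_
    rintro ⟨z, w⟩ hp
    simp only [hA, Finset.mem_filter, Finset.mem_product] at hp
    obtain ⟨⟨hz, hw⟩, hok⟩ := hp
    rcases w with _ | ⟨h, t⟩
    · exact absurd (fun x hx => by simp at hx) hok
    · have hnc : ¬ colGE natKey z h := by
        intro hc
        apply hok
        intro h' hh'
        simp only [List.head?_cons, Option.mem_def, Option.some.injEq] at hh'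
        rw [← hh']; exact hc
      have hcond := not_colGE hnc
      rcases mem_colFin.mp hw with ⟨-, hmem, -⟩
      have hlt : natKey h < natKey u := hmem h (List.mem_cons_self)
      rw [F3 u z h t hcond hlt, show (u :: z :: h :: t) = [u] ++ (z :: h :: t) from rfl,
        wrd_append, map_mul]
  have hsplit := Finset.sum_filter_add_sum_filter_not A (fun p => ok p.1 p.2)
    (fun p => qh (wrd (p.1 :: u :: p.2)))
  have hsplit0 := Finset.sum_filter_add_sum_filter_not A (fun p => ok p.1 p.2)
    (fun p => qh (wrd (p.1 :: p.2)))
  -- main identity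
  have main : qh (eL m 1 : FA N) * qh (wrd [u]) * qh (eL m k) =
      qh (eL m (k + 1)) * qh (wrd [u]) +
        qh (wrd [u]) * (qh (eL m 1) * qh (eL m k) - qh (eL m (k + 1))) := by
    rw [hprod2, ← hsplit, ← step1, hnot]
    congr 1
    congr 1
    rw [hprod0, ← hsplit0, ← hok_sum]
    exact (add_sub_cancel_left _ _).symm
  have h2 : qh (eL m 1 : FA N) * qh (wrd [u]) * qh (eL m k) -
      qh (wrd [u]) * (qh (eL m 1) * qh (eL m k) - qh (eL m (k + 1))) =
        qh (eL m (k + 1)) * qh (wrd [u]) := by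
    rw [main, add_sub_cancel_right]
  rw [← h2]
  simp only [mul_sub, sub_mul, mul_assoc]
  abel

/-- The commutator `e₁ u - u e₁` in the quotient. -/
def dlt (u : Letter N) : QP N :=
  qh (eL (natKey u) 1) * qh (wrd [u]) - qh (wrd [u]) * qh (eL (natKey u) 1)

lemma f2_unbarred (u : Letter N) (hu : u.2 = false) : qh (wrd [u]) * dlt u = 0 := by
  rw [dlt, mul_sub, sub_eq_zero, eL_one, map_sum, Finset.sum_mul, Finset.mul_sum,
    Finset.mul_sum, Finset.mul_sum]
  refine Finset.sum_congr rfl fun z hz => ?_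
  have hzu : natKey z < natKey u := by simpa [Sfin] using hz
  have h1 : qh (wrd [u]) * (qh (wrd [z]) * qh (wrd [u])) = qh (wrd [u, z, u]) := by
    rw [← map_mul, ← map_mul, ← wrd_append, ← wrd_append]; rfl
  have h2 : qh (wrd [u]) * (qh (wrd [u]) * qh (wrd [z])) = qh (wrd [u, u, z]) := by
    rw [← map_mul, ← map_mul, ← wrd_append, ← wrd_append]; rfl
  rw [h1, h2]
  exact (q_rel (placRel.k3 z u hu hzu)).symm

lemma f2_barred (u : Letter N) (hu : u.2 = true) : dlt u * qh (wrd [u]) = 0 := by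
  rw [dlt, sub_mul, sub_eq_zero, eL_one, map_sum, Finset.sum_mul, Finset.sum_mul,
    Finset.mul_sum, Finset.sum_mul]
  refine Finset.sum_congr rfl fun z hz => ?_
  have hzu : natKey z < natKey u := by simpa [Sfin] using hz
  have h1 : qh (wrd [z]) * qh (wrd [u]) * qh (wrd [u]) = qh (wrd [z, u, u]) := by
    rw [← map_mul, ← map_mul, ← wrd_append, ← wrd_append]; rfl
  have h2 : qh (wrd [u]) * qh (wrd [z]) * qh (wrd [u]) = qh (wrd [u, z, u]) := by
    rw [← map_mul, ← map_mul, ← wrd_append, ← wrd_append]; rfl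
  rw [h1, h2]
  exact q_rel (placRel.k4b z u hu hzu)

/-- `e_k` in the quotient, with integer index. -/
def eZQ (m : ℕ) (k : ℤ) : QP N := if 0 ≤ k then qh (eL m k.toNat) else 0

lemma eZQ_neg {m : ℕ} {k : ℤ} (h : k < 0) : (eZQ m k : QP N) = 0 := if_neg (by omega)

lemma eZQ_coe (m : ℕ) (k : ℕ) : (eZQ m (k : ℤ) : QP N) = qh (eL m k) := by
  rw [eZQ, if_pos (by positivity), Int.toNat_natCast]

lemma eZQ_zero (m : ℕ) : (eZQ m 0 : QP N) = 1 := by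
  have : ((0 : ℕ) : ℤ) = (0 : ℤ) := rfl
  rw [← this, eZQ_coe, eL_zero, map_one]

lemma key1Z (u : Letter N) (k : ℤ) :
    eZQ (natKey u) k * qh (wrd [u]) =
      qh (wrd [u]) * eZQ (natKey u) k + dlt u * eZQ (natKey u) (k - 1) := by
  rcases lt_trichotomy k 0 with hk | hk | hk
  · rw [eZQ_neg hk, eZQ_neg (by omega : k - 1 < 0)]
    simp
  · subst hk
    rw [eZQ_zero, eZQ_neg (by omega : (0 : ℤ) - 1 < 0)]
    simp
  · obtain ⟨j, rfl⟩ : ∃ j : ℕ, k = (j : ℤ) + 1 := ⟨(k - 1).toNat, by omega⟩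
    have h1 : (j : ℤ) + 1 = ((j + 1 : ℕ) : ℤ) := by push_cast; ring
    have h2 : (j : ℤ) + 1 - 1 = ((j : ℕ) : ℤ) := by ring
    rw [h2, h1]
    simp only [eZQ_coe]
    exact key1_nat u j

lemma recZ (u : Letter N) (k : ℤ) :
    (eZQ (natKey u + 1) k : QP N) =
      eZQ (natKey u) k + qh (wrd [u]) *
        (if u.2 then eZQ (natKey u + 1) (k - 1) else eZQ (natKey u) (k - 1)) := by
  rcases lt_trichotomy k 0 with hk | hk | hk
  · rw [eZQ_neg hk, eZQ_neg hk, eZQ_neg (by omega : k - 1 < 0),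
      eZQ_neg (by omega : k - 1 < 0)]
    simp
  · subst hk
    rw [eZQ_zero, eZQ_zero, eZQ_neg (by omega : (0 : ℤ) - 1 < 0),
      eZQ_neg (by omega : (0 : ℤ) - 1 < 0)]
    simp
  · obtain ⟨j, rfl⟩ : ∃ j : ℕ, k = (j : ℤ) + 1 := ⟨(k - 1).toNat, by omega⟩
    have h1 : (j : ℤ) + 1 = ((j + 1 : ℕ) : ℤ) := by push_cast; ring
    have h2 : (j : ℤ) + 1 - 1 = ((j : ℕ) : ℤ) := by ring
    rw [h2, h1]
    simp only [eZQ_coe]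
    have := congrArg qh (eL_rec u j)
    rw [map_add, map_mul] at this
    rw [this]
    congr 1
    congr 1
    rw [apply_ite qh]

lemma dlt_pow_u (u : Letter N) (hu : u.2 = true) {r : ℕ} (hr : r ≠ 0) :
    (dlt u) ^ r * qh (wrd [u]) = 0 := by
  obtain ⟨s, rfl⟩ : ∃ s, r = s + 1 := ⟨r - 1, by omega⟩
  rw [pow_succ, mul_assoc, f2_barred u hu, mul_zero]

lemma step1b (u : Letter N) (hu : u.2 = true) (p : ℕ) : ∀ (a : ℤ),
    eZQ (natKey u) a * qh (wrd [u]) ^ p =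
      ∑ r ∈ Finset.range (p + 1),
        qh (wrd [u]) ^ (p - r) * (dlt u) ^ r * eZQ (natKey u) (a - r) := by
  induction p with
  | zero =>
    intro a
    simp
  | succ p ih =>
    intro a
    rw [pow_succ, ← mul_assoc, ih a, Finset.sum_mul]
    have hterm : ∀ r ∈ Finset.range (p + 1),
        qh (wrd [u]) ^ (p - r) * (dlt u) ^ r * eZQ (natKey u) (a - r) * qh (wrd [u]) =
          qh (wrd [u]) ^ (p - r) * (dlt u) ^ r * (qh (wrd [u]) * eZQ (natKey u) (a - r)) +
            qh (wrd [u]) ^ (p - r) * (dlt u) ^ r * (dlt u * eZQ (natKey u) (a - r - 1)) := by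
      intro r _
      rw [mul_assoc, key1Z u (a - r), mul_add]
    rw [Finset.sum_congr rfl hterm, Finset.sum_add_distrib]
    have hfirst : ∑ r ∈ Finset.range (p + 1),
        qh (wrd [u]) ^ (p - r) * (dlt u) ^ r * (qh (wrd [u]) * eZQ (natKey u) (a - r)) =
          qh (wrd [u]) ^ (p + 1) * (dlt u) ^ 0 * eZQ (natKey u) (a - 0) := by
      rw [Finset.sum_eq_single 0]
      · rw [pow_zero, mul_one, mul_one, Nat.sub_zero, ← mul_assoc, ← pow_succ]
        norm_num
      · intro r _ hr
        rw [mul_assoc (qh (wrd [u]) ^ (p - r)), ← mul_assoc ((dlt u) ^ r),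
          dlt_pow_u u hu hr, zero_mul, mul_zero]
      · intro h
        exact absurd (Finset.mem_range.mpr (by omega)) h
    rw [hfirst]
    conv_rhs => rw [Finset.sum_range_succ']
    rw [add_comm]
    congr 1
    · refine Finset.sum_congr rfl fun r _ => ?_
      rw [Nat.succ_sub_succ, pow_succ,
        show (a - ((r + 1 : ℕ) : ℤ)) = a - r - 1 by push_cast; ring]
      simp only [mul_assoc]

lemma expandb (u : Letter N) (hu : u.2 = true) : ∀ (M : ℕ) (k : ℤ), k < M →
    (eZQ (natKey u + 1) k : QP N) =
      ∑ p ∈ Finset.range M, qh (wrd [u]) ^ p * eZQ (natKey u) (k - p) := by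
  intro M
  induction M with
  | zero =>
    intro k hk
    rw [Finset.range_zero, Finset.sum_empty, eZQ_neg (by exact_mod_cast hk)]
  | succ M ih =>
    intro k hk
    rw [Finset.sum_range_succ']
    have h0 : qh (wrd [u]) ^ 0 * eZQ (natKey u) (k - (0 : ℕ)) = eZQ (natKey u) k := by
      rw [pow_zero, one_mul]
      norm_num
    rw [h0]
    have hstep : ∀ p ∈ Finset.range M,
        qh (wrd [u]) ^ (p + 1) * eZQ (natKey u) (k - (p + 1 : ℕ)) =
          qh (wrd [u]) * (qh (wrd [u]) ^ p * eZQ (natKey u) (k - 1 - p)) := by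
      intro p _
      rw [pow_succ']
      rw [mul_assoc]
      congr 2
      push_cast
      ring
    rw [Finset.sum_congr rfl hstep, ← Finset.mul_sum,
      ← ih (k - 1) (by push_cast at hk ⊢; omega), recZ u k, hu, if_pos rfl]
    exact add_comm _ _

lemma tri {β : Type*} [AddCommMonoid β] (M : ℕ) (f : ℕ → ℕ → β) :
    ∑ q ∈ Finset.range M, ∑ r ∈ Finset.range (q + 1), f r (q - r) =
      ∑ r ∈ Finset.range M, ∑ s ∈ Finset.range (M - r), f r s := by
  induction M with
  | zero => simp
  | succ M ih =>
    rw [Finset.sum_range_succ, ih,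
      Finset.sum_range_succ (fun r => ∑ s ∈ Finset.range (M + 1 - r), f r s)]
    have hsplit : ∀ r ∈ Finset.range M, (∑ s ∈ Finset.range (M + 1 - r), f r s) =
        (∑ s ∈ Finset.range (M - r), f r s) + f r (M - r) := by
      intro r hr
      have hrM : r < M := Finset.mem_range.mp hr
      rw [show M + 1 - r = (M - r) + 1 by omega, Finset.sum_range_succ]
    rw [Finset.sum_congr rfl hsplit, Finset.sum_add_distrib,
      Finset.sum_range_succ (fun r => f r (M - r)), Nat.sub_self,
      show M + 1 - M = 1 by omega, Finset.sum_range_one, add_assoc]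

lemma commQ (N m : ℕ) : ∀ k l : ℤ, (eZQ m k : QP N) * eZQ m l = eZQ m l * eZQ m k := by
  induction m with
  | zero =>
    have h0 : ∀ k : ℤ, (eZQ 0 k : QP N) = if k = 0 then 1 else 0 := by
      intro k
      rcases lt_trichotomy k 0 with hk | hk | hk
      · rw [eZQ_neg hk, if_neg (by omega)]
      · subst hk; rw [eZQ_zero, if_pos rfl]
      · rw [if_neg (by omega)]
        obtain ⟨j, rfl⟩ : ∃ j : ℕ, k = ((j + 1 : ℕ) : ℤ) := ⟨(k - 1).toNat, by omega⟩
        rw [eZQ_coe]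
        have hempty : (eL 0 (j + 1) : FA N) = 0 := by
          rw [eL]
          have hS : (Sfin N 0) = ∅ := by
            ext x; simp [Sfin]
          have : colFin N 0 (j + 1) = ∅ := by
            show ((Sfin N 0 ×ˢ colFin N 0 j).filter _).image _ = ∅
            rw [hS]
            simp
          rw [this, Finset.sum_empty]
        rw [hempty, map_zero]
    intro k l
    rw [h0, h0]
    by_cases hk : k = 0 <;> by_cases hl : l = 0 <;> simp [hk, hl]
  | succ m ih =>
    by_cases hm : m < 2 * N
    case neg =>
      have hcol : ∀ k, colFin N (m + 1) k = colFin N m k := by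
        intro k
        ext w
        rw [mem_colFin, mem_colFin]
        constructor
        · rintro ⟨h1, h2, h3⟩
          exact ⟨h1, fun x hx => lt_of_lt_of_le (natKey_lt x) (by omega), h3⟩
        · rintro ⟨h1, h2, h3⟩
          exact ⟨h1, fun x hx => lt_of_lt_of_le (natKey_lt x) (by omega), h3⟩
      have heq : ∀ k : ℤ, (eZQ (m + 1) k : QP N) = eZQ m k := by
        intro k
        by_cases h : 0 ≤ k
        · rw [eZQ, eZQ, if_pos h, if_pos h, eL, eL, hcol]
        · rw [eZQ, eZQ, if_neg h, if_neg h]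
      intro k l
      rw [heq, heq]
      exact ih k l
    case pos =>
      obtain ⟨u, rfl⟩ : ∃ u : Letter N, natKey u = m := by
        refine ⟨(⟨m / 2, by omega⟩, decide (m % 2 = 1)), ?_⟩
        by_cases h2 : m % 2 = 1 <;> simp [natKey, h2] <;> omega
      rcases hb : u.2 with _ | _
      · -- unbarred
        have hrec : ∀ k : ℤ, (eZQ (natKey u + 1) k : QP N) =
            eZQ (natKey u) k + qh (wrd [u]) * eZQ (natKey u) (k - 1) := by
          intro k
          rw [recZ u k, hb]
          simp
        have hudlt : qh (wrd [u]) * dlt u = 0 := f2_unbarred u hb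
        have expand : ∀ k l : ℤ, (eZQ (natKey u + 1) k : QP N) * eZQ (natKey u + 1) l =
            eZQ (natKey u) k * eZQ (natKey u) l +
              qh (wrd [u]) * (eZQ (natKey u) k * eZQ (natKey u) (l - 1) +
                eZQ (natKey u) (k - 1) * eZQ (natKey u) l) +
              dlt u * (eZQ (natKey u) (k - 1) * eZQ (natKey u) (l - 1)) +
              qh (wrd [u]) * qh (wrd [u]) *
                (eZQ (natKey u) (k - 1) * eZQ (natKey u) (l - 1)) := by
          intro k l
          rw [hrec k, hrec l]
          have h1 := key1Z u k
          have h2 := key1Z u (k - 1)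
          have t2 : eZQ (natKey u) k * (qh (wrd [u]) * eZQ (natKey u) (l - 1)) =
              qh (wrd [u]) * (eZQ (natKey u) k * eZQ (natKey u) (l - 1)) +
                dlt u * (eZQ (natKey u) (k - 1) * eZQ (natKey u) (l - 1)) := by
            rw [← mul_assoc, h1, add_mul]
            simp only [mul_assoc]
          have t4 : (qh (wrd [u]) * eZQ (natKey u) (k - 1)) *
              (qh (wrd [u]) * eZQ (natKey u) (l - 1)) =
              qh (wrd [u]) * qh (wrd [u]) *
                (eZQ (natKey u) (k - 1) * eZQ (natKey u) (l - 1)) := by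
            rw [mul_assoc, ← mul_assoc (eZQ (natKey u) (k - 1)), h2, add_mul, mul_add]
            have hz : qh (wrd [u]) * (dlt u * eZQ (natKey u) (k - 1 - 1) *
                eZQ (natKey u) (l - 1)) = 0 := by
              rw [show dlt u * eZQ (natKey u) (k - 1 - 1) * eZQ (natKey u) (l - 1) =
                dlt u * (eZQ (natKey u) (k - 1 - 1) * eZQ (natKey u) (l - 1)) from
                  mul_assoc _ _ _, ← mul_assoc, hudlt, zero_mul]
            rw [hz, add_zero]
            simp only [mul_assoc]
          rw [add_mul, mul_add, mul_add, t2, t4]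
          simp only [mul_add, mul_assoc]
          abel
        intro k l
        rw [expand k l, expand l k, ih k l, ih k (l - 1), ih (k - 1) l, ih (k - 1) (l - 1),
          add_comm (eZQ (natKey u) (l - 1) * eZQ (natKey u) k)
            (eZQ (natKey u) l * eZQ (natKey u) (k - 1))]
      · -- barred
        have hexp := expandb u hb
        have box : ∀ (M : ℕ) (k l : ℤ), k < M → l < M → k + l + 1 ≤ M →
            (eZQ (natKey u + 1) k : QP N) * eZQ (natKey u + 1) l =
              ∑ x ∈ Finset.range M ×ˢ Finset.range M ×ˢ Finset.range M,
                qh (wrd [u]) ^ (x.1 + x.2.2) * dlt u ^ x.2.1 *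
                  (eZQ (natKey u) (k - x.1 - x.2.1) *
                    eZQ (natKey u) (l - x.2.1 - x.2.2)) := by
          intro M k l hkM hlM hklM
          rw [hexp M k hkM, hexp M l hlM, Finset.sum_mul_sum]
          have inner : ∀ p ∈ Finset.range M,
              (∑ q ∈ Finset.range M, (qh (wrd [u]) ^ p * eZQ (natKey u) (k - p)) *
                (qh (wrd [u]) ^ q * eZQ (natKey u) (l - q))) =
              ∑ r ∈ Finset.range M, ∑ s ∈ Finset.range M,
                qh (wrd [u]) ^ (p + s) * dlt u ^ r *
                  (eZQ (natKey u) (k - p - r) * eZQ (natKey u) (l - r - s)) := by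
            intro p _
            have hpt : ∀ q ∈ Finset.range M,
                (qh (wrd [u]) ^ p * eZQ (natKey u) (k - p)) *
                  (qh (wrd [u]) ^ q * eZQ (natKey u) (l - q)) =
                ∑ r ∈ Finset.range (q + 1),
                  qh (wrd [u]) ^ (p + (q - r)) * dlt u ^ r *
                    (eZQ (natKey u) (k - p - r) *
                      eZQ (natKey u) (l - r - ((q - r : ℕ) : ℤ))) := by
              intro q _
              rw [mul_assoc, ← mul_assoc (eZQ (natKey u) (k - p)) (qh (wrd [u]) ^ q),
                step1b u hb q (k - p), Finset.sum_mul, Finset.mul_sum]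
              refine Finset.sum_congr rfl fun r hr => ?_
              have hrq : r ≤ q := by
                have := Finset.mem_range.mp hr
                omega
              have hcast : l - (q : ℤ) = l - r - ((q - r : ℕ) : ℤ) := by
                rw [Nat.cast_sub hrq]
                ring
              rw [hcast, pow_add]
              simp only [mul_assoc]
            rw [Finset.sum_congr rfl hpt,
              tri M (fun r s => qh (wrd [u]) ^ (p + s) * dlt u ^ r *
                (eZQ (natKey u) (k - p - r) * eZQ (natKey u) (l - r - s)))]
            refine Finset.sum_congr rfl fun r hr => ?_
            refine Finset.sum_subset (Finset.range_subset_range.mpr (by omega)) ?_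
            intro s hs hns
            have hsM : s < M := Finset.mem_range.mp hs
            have hsr : M - r ≤ s := by
              by_contra hcon
              exact hns (Finset.mem_range.mpr (by omega))
            have hrM : r < M := Finset.mem_range.mp hr
            have hdisj : k - (p : ℤ) - r < 0 ∨ l - (r : ℤ) - s < 0 := by omega
            rcases hdisj with h | h
            · rw [eZQ_neg h, zero_mul, mul_zero]
            · rw [eZQ_neg h, mul_zero, mul_zero]
          rw [Finset.sum_congr rfl inner]
          conv_rhs => rw [Finset.sum_product]
          refine Finset.sum_congr rfl fun p _ => ?_
          rw [Finset.sum_product]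
        intro k l
        by_cases hk0 : k < 0
        · rw [eZQ_neg hk0, zero_mul, mul_zero]
        by_cases hl0 : l < 0
        · rw [eZQ_neg hl0, zero_mul, mul_zero]
        push_neg at hk0 hl0
        set M := k.toNat + l.toNat + 1 with hM
        have c1 : k < (M : ℤ) := by omega
        have c2 : l < (M : ℤ) := by omega
        have c3 : k + l + 1 ≤ (M : ℤ) := by omega
        rw [box M k l c1 c2 c3, box M l k c2 c1 (by omega)]
        refine Finset.sum_nbij' (fun x => (x.2.2, x.2.1, x.1)) (fun x => (x.2.2, x.2.1, x.1))
          ?_ ?_ ?_ ?_ ?_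
        · rintro ⟨p, r, s⟩ hx
          simp only [Finset.mem_product, Finset.mem_range] at hx ⊢
          exact ⟨hx.2.2, hx.2.1, hx.1⟩
        · rintro ⟨p, r, s⟩ hx
          simp only [Finset.mem_product, Finset.mem_range] at hx ⊢
          exact ⟨hx.2.2, hx.2.1, hx.1⟩
        · rintro ⟨p, r, s⟩ _
          rfl
        · rintro ⟨p, r, s⟩ _
          rfl
        · rintro ⟨p, r, s⟩ _
          show qh (wrd [u]) ^ (p + s) * dlt u ^ r *
              (eZQ (natKey u) (k - p - r) * eZQ (natKey u) (l - r - s)) =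
            qh (wrd [u]) ^ (s + p) * dlt u ^ r *
              (eZQ (natKey u) (l - s - r) * eZQ (natKey u) (k - r - p))
          rw [ih (k - p - r) (l - r - s), Nat.add_comm p s,
            show l - (r : ℤ) - s = l - s - r by ring,
            show k - (p : ℤ) - r = k - r - p by ring]

lemma eU_eq_eL (N : ℕ) (j : ℕ) : (eU natKey j : FA N) = eL (2 * N) j := by
  have huniv : (Set.univ : Set (Letter N)) = {x : Letter N | natKey x < 2 * N} := by
    ext x
    simp [natKey_lt x]
  show eSet natKey Set.univ j = _
  rw [huniv, eSet_eq_sum_colFin]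
  rfl

theorem elementary_commute' (N : ℕ) (k l : ℕ) :
    RingQuot.mkRingHom (placRel N natKey) (eU natKey k * eU natKey l) =
      RingQuot.mkRingHom (placRel N natKey) (eU natKey l * eU natKey k) := by
  show (qh (eU natKey k * eU natKey l) : QP N) = qh (eU natKey l * eU natKey k)
  rw [map_mul, map_mul, eU_eq_eL, eU_eq_eL, ← eZQ_coe, ← eZQ_coe]
  exact commQ N (2 * N) k l

end NCS

namespace NCS

/-- The noncommutative super elementary symmetric functions
commute in the `<`-colored plactic algebra `U/I_plac^<`. -/
theorem elementary_commute_mod_plactic (N : ℕ) (k l : ℕ) :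
    RingQuot.mkRingHom (placRel N natKey) (eU natKey k * eU natKey l) =
      RingQuot.mkRingHom (placRel N natKey) (eU natKey l * eU natKey k) :=
  elementary_commute' N k l

end NCS
end
end

section
/- For a colored word w = w_1···w_t over the alphabet A with shuffle orders ⋖ and ⋖' that agree except that b ⋖ ā while ā ⋖' b (for some specific unbarred b and barred ā), define conv(w) to fix all letters other than b, ā and to cyclically rotate each maximal consecutive subword consisting only of b's and ā's once to the right. Then Des_{⋖'}(conv(w)) = Des_{⋖}(w), where Des_⋖(w) = { i : w_i ⋗ w_{i+1}, or w_i and w_{i+1} are equal barred letters }. -/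
open scoped BigOperators
open Classical

noncomputable section

namespace NCS

/-!
No letter lies strictly between `b` and `ā` in either order, so every other letter lies on the
same side of both, and on the same side in `⋖` and `⋖'`. Hence a comparison between a letter
outside `{b, ā}` and one inside does not see which of `b`, `ā` it is, nor which order is used.
Conversion fixes the letters outside `{b, ā}` and the positions occupied by `b`'s and `ā`'s, so
only adjacent pairs inside a run need care: there `conv(w)` carries `w_i` at position `i + 1`,
and both `w_i w_{i+1}` under `⋖` and `· w_i` under `⋖'` are descents exactly when `w_i = ā`.
-/

variable {N : ℕ}

section Conv

variable {α : Type*} (p : α → Bool)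

theorem rotR_append_singleton (l : List α) (y : α) : rotR (l ++ [y]) = y :: l := by
  rw [rotR, List.length_append, List.length_singleton, Nat.add_sub_cancel,
    List.rotate_eq_drop_append_take (by simp), List.drop_left, List.take_left]
  rfl

theorem length_rotR (l : List α) : (rotR l).length = l.length := by
  simp [rotR]

theorem getElem?_rotR_succ (l : List α) {i : ℕ} (h : i + 1 < l.length) :
    (rotR l)[i + 1]? = l[i]? := by
  obtain rfl | ⟨l, y, rfl⟩ := l.eq_nil_or_concat
  · simp at h
  · rw [List.concat_eq_append, rotR_append_singleton, List.getElem?_cons_succ,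
      List.getElem?_append_left (by simpa using h)]

theorem takeWhile_append_dropWhile_of_pos {x : α} (xs : List α) (h : p x = true) :
    (x :: xs).takeWhile p ++ xs.dropWhile p = x :: xs := by
  rw [List.takeWhile_cons_of_pos h, List.cons_append, List.takeWhile_append_dropWhile]

theorem map_conv (l : List α) : (conv p l).map p = l.map p := by
  fun_induction conv p l with
  | case1 => rfl
  | case2 x xs hx ih =>
    have hrun : ((x :: xs).takeWhile p).map p =
        List.replicate ((x :: xs).takeWhile p).length true :=
      List.eq_replicate_iff.2 ⟨by simp, by simpa using fun y hy => List.mem_takeWhile_imp hy⟩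
    rw [List.map_append, ih, rotR, List.map_rotate, hrun, List.rotate_replicate, ← hrun,
      ← List.map_append, List.takeWhile_cons_of_pos hx, List.cons_append,
      List.takeWhile_append_dropWhile]
  | case3 x xs hx ih => simp [ih]

theorem length_conv (l : List α) : (conv p l).length = l.length := by
  simpa using congrArg List.length (map_conv p l)

theorem getElem?_conv_of_neg {l : List α} {i : ℕ} {x : α} (hx : l[i]? = some x)
    (hpx : p x = false) : (conv p l)[i]? = some x := by
  fun_induction conv p l generalizing i with
  | case1 => simp at hx
  | case2 y ys hy ih =>
    rw [← takeWhile_append_dropWhile_of_pos p ys hy] at hx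
    have hi : ((y :: ys).takeWhile p).length ≤ i := by
      by_contra! hi
      rw [List.getElem?_append_left hi] at hx
      simpa [hpx] using List.mem_takeWhile_imp (List.mem_of_getElem? hx)
    rw [List.getElem?_append_right (by rwa [length_rotR]), length_rotR]
    rw [List.getElem?_append_right hi] at hx
    exact ih hx
  | case3 y ys hy ih =>
    cases i with
    | zero => simpa using hx
    | succ i => simpa using ih hx

theorem getElem?_conv_succ {l : List α} {i : ℕ} {x y : α} (hx : l[i]? = some x)
    (hy : l[i + 1]? = some y) (hpx : p x = true) (hpy : p y = true) :
    (conv p l)[i + 1]? = some x := by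
  fun_induction conv p l generalizing i with
  | case1 => simp at hx
  | case2 z zs hz ih =>
    rw [← takeWhile_append_dropWhile_of_pos p zs hz] at hx hy
    set t := (z :: zs).takeWhile p
    rcases lt_trichotomy (i + 1) t.length with hlt | heq | hgt
    · rw [List.getElem?_append_left (by rwa [length_rotR]), getElem?_rotR_succ t hlt,
        ← hx, List.getElem?_append_left (by omega)]
    · have hd := List.head?_dropWhile_not p zs
      rw [List.getElem?_append_right heq.ge, heq, Nat.sub_self, ← List.head?_eq_getElem?] at hy
      simp [hy, hpy] at hd
    · rw [List.getElem?_append_right (by omega)] at hx hy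
      rw [List.getElem?_append_right (by rw [length_rotR]; omega), length_rotR,
        Nat.sub_add_comm (by omega)]
      exact ih hx (by rwa [Nat.sub_add_comm (by omega)] at hy)
  | case3 z zs hz ih =>
    cases i with
    | zero => simp_all
    | succ i => simpa using ih hx hy

theorem apply_getElem_conv {l : List α} {i : ℕ} (h : i < (conv p l).length)
    (hl : i < l.length) : p (conv p l)[i] = p l[i] := by
  simpa [List.getElem?_eq_getElem h, List.getElem?_eq_getElem hl] using
    congrArg (·[i]?) (map_conv p l)

theorem getElem_conv_of_neg {l : List α} {i : ℕ} (h : i < (conv p l).length)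
    (hl : i < l.length) (hpx : p l[i] = false) : (conv p l)[i] = l[i] := by
  simpa [List.getElem?_eq_getElem h] using
    getElem?_conv_of_neg p (List.getElem?_eq_getElem hl) hpx

theorem getElem_conv_succ {l : List α} {i : ℕ} (h : i + 1 < (conv p l).length)
    (hl : i + 1 < l.length) (hpx : p l[i] = true) (hpy : p l[i + 1] = true) :
    (conv p l)[i + 1] = l[i] := by
  simpa [List.getElem?_eq_getElem h] using
    getElem?_conv_succ p (List.getElem?_eq_getElem _) (List.getElem?_eq_getElem hl) hpx hpy

end Conv

theorem mem_desSet_iff {key : Letter N → ℕ} {w : List (Letter N)} {i : ℕ} :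
    i ∈ DesSet key w ↔ ∃ h : i + 1 < w.length, colGE key w[i] w[i + 1] := by
  simp only [DesSet, Set.mem_ofPred_eq, List.get_eq_getElem, colGE]
  refine exists_congr fun h => or_congr_right ⟨?_, ?_⟩ <;> rintro ⟨heq, hbar⟩ <;>
    exact ⟨heq, by rwa [heq] at *⟩

theorem colGE_iff_key_lt_of_ne {key : Letter N → ℕ} {x y : Letter N} (hxy : x ≠ y) :
    colGE key x y ↔ key y < key x := by
  simp [colGE, hxy]

theorem desSet_eq_of_colGE_iff {key key' : Letter N → ℕ} {w w' : List (Letter N)}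
    (hlen : w'.length = w.length)
    (hdes : ∀ i (h' : i + 1 < w'.length) (h : i + 1 < w.length),
      colGE key' w'[i] w'[i + 1] ↔ colGE key w[i] w[i + 1]) :
    DesSet key' w' = DesSet key w := by
  ext i
  rw [mem_desSet_iff, mem_desSet_iff]
  exact ⟨fun ⟨h', hw'⟩ => ⟨hlen ▸ h', (hdes i h' _).1 hw'⟩,
    fun ⟨h, hw⟩ => ⟨hlen ▸ h, (hdes i _ h).2 hw⟩⟩

section SwapAdjacent

variable {key key' : Letter N → ℕ} {A B : Letter N}
  (hk : Function.Injective key) (hlt : key B < key A) (hlt' : key' A < key' B)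
  (hagree : ∀ x y : Letter N, ¬ ((x = A ∧ y = B) ∨ (x = B ∧ y = A)) →
    (key x < key y ↔ key' x < key' y))
include hagree

theorem key_lt_iff_of_left_ne {x : Letter N} (hxA : x ≠ A) (hxB : x ≠ B) (y : Letter N) :
    key x < key y ↔ key' x < key' y :=
  hagree x y (by rintro (⟨rfl, -⟩ | ⟨rfl, -⟩) <;> contradiction)

theorem key_lt_iff_of_right_ne {y : Letter N} (hyA : y ≠ A) (hyB : y ≠ B) (x : Letter N) :
    key x < key y ↔ key' x < key' y :=
  hagree x y (by rintro (⟨-, rfl⟩ | ⟨-, rfl⟩) <;> contradiction)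

include hk hlt hlt' in
theorem key_lt_both_or_both_lt {x : Letter N} (hxA : x ≠ A) (hxB : x ≠ B) :
    (key x < key B ∧ key x < key A) ∨ (key B < key x ∧ key A < key x) := by
  rcases lt_trichotomy (key x) (key B) with hxB' | hxB' | hBx
  · exact .inl ⟨hxB', hxB'.trans hlt⟩
  · exact absurd (hk hxB') hxB
  · refine .inr ⟨hBx, ?_⟩
    rcases lt_trichotomy (key A) (key x) with hAx | hAx | hxA'
    · exact hAx
    · exact absurd (hk hAx).symm hxA
    · have := ((key_lt_iff_of_right_ne hagree hxA hxB B).1 hBx).trans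
        ((key_lt_iff_of_left_ne hagree hxA hxB A).1 hxA')
      exact absurd hlt' this.not_gt

include hk hlt hlt' in
theorem colGE_iff_of_swap (hA : A.2 = true) (hB : B.2 = false) {x y x' y' : Letter N}
    (hx : (x' = A ∨ x' = B) ↔ (x = A ∨ x = B))
    (hy : (y' = A ∨ y' = B) ↔ (y = A ∨ y = B))
    (hfx : ¬ (x = A ∨ x = B) → x' = x) (hfy : ¬ (y = A ∨ y = B) → y' = y)
    (hrot : (x = A ∨ x = B) → (y = A ∨ y = B) → y' = x) :
    colGE key' x' y' ↔ colGE key x y := by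
  have hAB : A ≠ B := fun h => by simp [h, hB] at hA
  by_cases sx : x = A ∨ x = B <;> by_cases sy : y = A ∨ y = B
  · obtain rfl := hrot sx sy
    rcases sx with rfl | rfl <;> rcases sy with rfl | rfl <;>
      rcases hx.2 (by simp) with rfl | rfl <;>
      simp [colGE, hA, hB, hAB, hAB.symm, hlt, hlt', hlt.not_gt, hlt'.not_gt]
  · obtain rfl := hfy sy
    push Not at sy
    have hbetween := key_lt_both_or_both_lt hk hlt hlt' hagree sy.1 sy.2
    rw [colGE_iff_key_lt_of_ne (by rintro rfl; exact hx.2 sx |>.elim sy.1 sy.2),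
      colGE_iff_key_lt_of_ne (by rintro rfl; exact sx.elim sy.1 sy.2),
      ← key_lt_iff_of_left_ne hagree sy.1 sy.2]
    rcases sx with rfl | rfl <;> rcases hx.2 (by simp) with rfl | rfl <;> omega
  · obtain rfl := hfx sx
    push Not at sx
    have hbetween := key_lt_both_or_both_lt hk hlt hlt' hagree sx.1 sx.2
    rw [colGE_iff_key_lt_of_ne (by rintro rfl; exact hy.2 sy |>.elim sx.1 sx.2),
      colGE_iff_key_lt_of_ne (by rintro rfl; exact sy.elim sx.1 sx.2),
      ← key_lt_iff_of_right_ne hagree sx.1 sx.2]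
    rcases sy with rfl | rfl <;> rcases hy.2 (by simp) with rfl | rfl <;> omega
  · obtain rfl := hfx sx
    obtain rfl := hfy sy
    push Not at sx
    exact or_congr (key_lt_iff_of_right_ne hagree sx.1 sx.2 _).symm Iff.rfl

include hk hlt hlt' in
theorem colGE_conv_iff (hA : A.2 = true) (hB : B.2 = false) {p : Letter N → Bool}
    (hp : ∀ u, p u = true ↔ u = A ∨ u = B) {w : List (Letter N)} {i : ℕ}
    (h : i + 1 < (conv p w).length) (hw : i + 1 < w.length) :
    colGE key' (conv p w)[i] (conv p w)[i + 1] ↔ colGE key w[i] w[i + 1] := by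
  have hclass (j : ℕ) (hj : j < (conv p w).length) (hwj : j < w.length) :
      ((conv p w)[j] = A ∨ (conv p w)[j] = B) ↔ (w[j] = A ∨ w[j] = B) := by
    rw [← hp, ← hp, apply_getElem_conv p hj hwj]
  have hfix (j : ℕ) (hj : j < (conv p w).length) (hwj : j < w.length)
      (hnot : ¬ (w[j] = A ∨ w[j] = B)) : (conv p w)[j] = w[j] :=
    getElem_conv_of_neg p hj hwj (by simpa [← hp] using hnot)
  exact colGE_iff_of_swap hk hlt hlt' hagree hA hB (hclass i (by omega) (by omega))
    (hclass _ h hw) (hfix i (by omega) (by omega)) (hfix _ h hw)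
    fun hx hy => getElem_conv_succ p h hw ((hp _).2 hx) ((hp _).2 hy)

end SwapAdjacent

theorem word_conversion_descents_general (N : ℕ) (key key' : Letter N → ℕ)
    (hk : IsShuffleKey key) (b abar : Fin N)
    (hlt : key (b, false) < key (abar, true))
    (hlt' : key' (abar, true) < key' (b, false))
    (hagree : ∀ x y : Letter N,
      ¬ ((x = ((abar, true) : Letter N) ∧ y = ((b, false) : Letter N)) ∨
          (x = ((b, false) : Letter N) ∧ y = ((abar, true) : Letter N))) →
      (key x < key y ↔ key' x < key' y))
    (w : List (Letter N)) :
    DesSet key'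
        (conv (fun u => decide (u = ((abar, true) : Letter N) ∨
          u = ((b, false) : Letter N))) w) =
      DesSet key w := by
  exact desSet_eq_of_colGE_iff (length_conv _ w) fun i h hw =>
    colGE_conv_iff hk.1 hlt hlt' hagree rfl rfl (fun u => decide_eq_true_iff) h hw

/-- Word conversion between two shuffle orders which differ
only in the order of the unbarred letter `b` and the barred letter `ā`
preserves descent sets: `Des_{⋖'}(conv(w)) = Des_⋖(w)`. -/
theorem word_conversion_descents (N : ℕ) (key key' : Letter N → ℕ)
    (hk : IsShuffleKey key) (hk' : IsShuffleKey key') (b abar : Fin N)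
    (hlt : key (b, false) < key (abar, true))
    (hlt' : key' (abar, true) < key' (b, false))
    (hagree : ∀ x y : Letter N,
      ¬ ((x = ((abar, true) : Letter N) ∧ y = ((b, false) : Letter N)) ∨
          (x = ((b, false) : Letter N) ∧ y = ((abar, true) : Letter N))) →
      (key x < key y ↔ key' x < key' y))
    (w : List (Letter N)) :
    DesSet key'
        (conv (fun u => decide (u = ((abar, true) : Letter N) ∨
          u = ((b, false) : Letter N))) w) =
      DesSet key w :=
  word_conversion_descents_general N key key' hk b abar hlt hlt' hagree w

end NCS
end
end
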